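/- If f : X → Y is a localizing immersion of noetherian schemes, then the image f(X) is stable under generization in Y (i.e., if y ∈ f(X) and y' specializes to y, then y' ∈ f(X)), and the natural map of ringed spaces induces an isomorphism of (X, O_X) onto the ringed space (f(X), O_Y|_{f(X)}) given by the subspace topology on f(X) and the restriction of the structure sheaf of Y. -/

import Mathlib

/-! Formalization of a statement from "Compactification for essentially finite-type maps"
(S. Nayak). All schemes are noetherian where stated. -/

open AlgebraicGeometry CategoryTheory CategoryTheory.Limits TopologicalSpace Opposite

universe u

/-- A ring homomorphism `φ : A →+* B` is a localization homomorphism if it realizes `B` as a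
localization of `A` at some multiplicative subset, with `φ` as the canonical map. -/
def IsLocalizationHom {A B : Type u} [CommRing A] [CommRing B] (φ : A →+* B) : Prop :=
  ∃ M : Submonoid A, @IsLocalization A _ M B _ φ.toAlgebra

/-- A ring homomorphism `φ : A →+* B` is essentially of finite type if it realizes `B` as a
localization of a finitely generated `A`-algebra. -/
def IsEssFiniteTypeHom {A B : Type u} [CommRing A] [CommRing B] (φ : A →+* B) : Prop :=
  @Algebra.EssFiniteType A B _ _ φ.toAlgebra

/-- A morphism of schemes is localizing if every point `y` of the target has an affine open
neighborhood `V = Spec A` such that `f ⁻¹ V` is covered by finitely many affine opens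
`Uᵢ = Spec Bᵢ` for which the induced ring homomorphisms `A →+* Bᵢ` are localization
homomorphisms. -/
def IsLocalizingMorphism {X Y : Scheme.{u}} (f : X ⟶ Y) : Prop :=
  ∀ y : Y, ∃ V : Y.affineOpens, y ∈ V.1 ∧
    ∃ 𝒰 : Finset X.affineOpens,
      (∀ x : X, f.base x ∈ V.1 → ∃ U ∈ 𝒰, x ∈ U.1) ∧
      ∀ U ∈ 𝒰, ∃ hle : U.1 ≤ f ⁻¹ᵁ V.1, IsLocalizationHom (f.appLE V.1 U.1 hle).hom

/-- A localizing immersion is a localizing morphism that is set-theoretically injective. -/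
def IsLocalizingImmersion {X Y : Scheme.{u}} (f : X ⟶ Y) : Prop :=
  IsLocalizingMorphism f ∧ Function.Injective f.base

/-- A morphism of schemes is essentially of finite type if every point `y` of the target has an
affine open neighborhood `V = Spec A` such that `f ⁻¹ V` is covered by finitely many affine
opens `Uᵢ = Spec Bᵢ` for which the induced ring homomorphisms `A →+* Bᵢ` are essentially of
finite type. -/
def IsEssentiallyFiniteType {X Y : Scheme.{u}} (f : X ⟶ Y) : Prop :=
  ∀ y : Y, ∃ V : Y.affineOpens, y ∈ V.1 ∧
    ∃ 𝒰 : Finset X.affineOpens,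
      (∀ x : X, f.base x ∈ V.1 → ∃ U ∈ 𝒰, x ∈ U.1) ∧
      ∀ U ∈ 𝒰, ∃ hle : U.1 ≤ f ⁻¹ᵁ V.1, IsEssFiniteTypeHom (f.appLE V.1 U.1 hle).hom

/-! A localization `A → S⁻¹A` is flat and identifies the local rings of `S⁻¹A` with those of
`A` at the corresponding primes, so `f` is flat (hence generalizing, which makes its image stable
under generization) and all its stalk maps are isomorphisms. For the embedding, let `C ⊆ X` be
closed and `f z ∈ closure (f '' C)`. Since `X` is noetherian, `C` is a finite union of irreducible
closed sets, so `f z` is a specialization of `f ξ` for some generic point `ξ ∈ C`. Lifting the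
generization `f ξ ⤳ f z` along `f` and using injectivity gives `ξ ⤳ z`, hence `z ∈ C`: every
closed subset of `X` is the preimage of a closed subset of `Y`. -/

open Topology

theorem IsLocallyClosed.exists_mem_specializes_of_mem_closure_image {α β : Type*}
    [TopologicalSpace α] [TopologicalSpace β] [NoetherianSpace α] [QuasiSober α] {f : α → β}
    (hf : Continuous f) {S : Set α} (hS : IsLocallyClosed S) {y : β}
    (hy : y ∈ closure (f '' S)) : ∃ ξ ∈ S, f ξ ⤳ y := by
  obtain ⟨O, Z, hO, hZ, rfl⟩ := hS
  obtain ⟨K, hK, hKc, hKi, hcl⟩ :=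
    NoetherianSpace.exists_finite_set_isClosed_irreducible (isClosed_closure (s := O ∩ Z))
  have hcover : f '' (O ∩ Z) ⊆ ⋃ k ∈ K, f '' (k ∩ (O ∩ Z)) := by
    rintro _ ⟨s, hs, rfl⟩
    obtain ⟨k, hk, hsk⟩ := Set.mem_sUnion.1 (hcl ▸ subset_closure hs)
    exact Set.mem_biUnion hk ⟨s, ⟨hsk, hs⟩, rfl⟩
  have hyK := closure_mono hcover hy
  rw [hK.closure_biUnion] at hyK
  obtain ⟨k, hk, hyk⟩ := Set.mem_iUnion₂.1 hyK
  obtain ⟨ξ, hξ⟩ := QuasiSober.sober (hKi k hk) (hKc k hk)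
  have hne : (k ∩ (O ∩ Z)).Nonempty := by
    by_contra h
    rw [Set.not_nonempty_iff_eq_empty.1 h, Set.image_empty, closure_empty] at hyk
    exact hyk
  have hξO : ξ ∈ O := (hξ.mem_open_set_iff hO).2 (hne.mono fun a ha => ⟨ha.1, ha.2.1⟩)
  have hξZ : ξ ∈ Z :=
    closure_minimal Set.inter_subset_right hZ (hcl ▸ Set.mem_sUnion_of_mem hξ.mem hk)
  refine ⟨ξ, ⟨hξO, hξZ⟩, specializes_iff_mem_closure.2 ?_⟩
  refine closure_minimal ?_ isClosed_closure hyk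
  rintro _ ⟨a, ha, rfl⟩
  exact ((hξ.specializes ha.1).map hf).mem_closure

theorem GeneralizingMap.preimage_closure_image_eq_of_injective {α β : Type*}
    [TopologicalSpace α] [TopologicalSpace β] [NoetherianSpace α] [QuasiSober α] {f : α → β}
    (hgen : GeneralizingMap f) (hf : Continuous f) (hinj : Function.Injective f) {C : Set α}
    (hC : IsClosed C) : f ⁻¹' closure (f '' C) = C := by
  refine Set.Subset.antisymm (fun x hx => ?_)
    ((Set.subset_preimage_image f C).trans (Set.preimage_mono subset_closure))
  obtain ⟨ξ, hξC, hξx⟩ := hC.isLocallyClosed.exists_mem_specializes_of_mem_closure_image hf hx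
  obtain ⟨x', hx'x, hx'ξ⟩ := hgen hξx
  rw [hinj hx'ξ] at hx'x
  exact hx'x.mem_closed hC hξC

theorem GeneralizingMap.isEmbedding_of_injective {α β : Type*}
    [TopologicalSpace α] [TopologicalSpace β] [NoetherianSpace α] [QuasiSober α] {f : α → β}
    (hgen : GeneralizingMap f) (hf : Continuous f) (hinj : Function.Injective f) :
    IsEmbedding f := by
  refine ⟨⟨le_antisymm hf.le_induced fun U hU => isOpen_induced_iff.2
    ⟨(closure (f '' Uᶜ))ᶜ, isClosed_closure.isOpen_compl, ?_⟩⟩, hinj⟩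
  rw [Set.preimage_compl, hgen.preimage_closure_image_eq_of_injective hf hinj hU.isClosed_compl,
    compl_compl]

theorem IsLocalizationHom.flat {A B : Type u} [CommRing A] [CommRing B] {φ : A →+* B}
    (h : IsLocalizationHom φ) : φ.Flat := by
  obtain ⟨M, hM⟩ := h
  algebraize [φ]
  exact IsLocalization.flat B M

theorem IsLocalizationHom.bijective_localRingHom {A B : Type u} [CommRing A] [CommRing B]
    {φ : A →+* B} (h : IsLocalizationHom φ) (p : Ideal A) [p.IsPrime] (q : Ideal B) [q.IsPrime]
    (hpq : p = q.comap φ) : Function.Bijective (Localization.localRingHom p q φ hpq) := by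
  subst hpq
  obtain ⟨M, hM⟩ := h
  algebraize [φ]
  have : IsLocalization.AtPrime (Localization.AtPrime q) (q.comap φ) :=
    IsLocalization.isLocalization_isLocalization_atPrime_isLocalization M _ q
  have : Localization.localRingHom (q.comap φ) q φ rfl =
      (IsLocalization.algEquiv (q.comap φ).primeCompl (Localization.AtPrime (q.comap φ))
        (Localization.AtPrime q)).toRingHom :=
    IsLocalization.ringHom_ext (q.comap φ).primeCompl <| RingHom.ext fun a => by
      rw [RingHom.comp_apply, Localization.localRingHom_to_map, RingHom.comp_apply]
      change _ = IsLocalization.algEquiv _ _ _ (algebraMap A _ a)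
      rw [AlgEquiv.commutes, IsScalarTower.algebraMap_apply A B (Localization.AtPrime q)]
      rfl
  rw [this]
  exact (IsLocalization.algEquiv _ _ _).bijective

namespace IsLocalizingMorphism

variable {X Y : Scheme.{u}} {f : X ⟶ Y}

theorem exists_appLE (hf : IsLocalizingMorphism f) (x : X) :
    ∃ (V : Y.affineOpens) (U : X.affineOpens) (_ : x ∈ U.1) (e : U.1 ≤ f ⁻¹ᵁ V.1),
      IsLocalizationHom (f.appLE V U e).hom := by
  obtain ⟨V, hxV, 𝒰, hcov, h𝒰⟩ := hf (f.base x)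
  obtain ⟨U, hU, hxU⟩ := hcov x hxV
  obtain ⟨e, he⟩ := h𝒰 U hU
  exact ⟨V, U, hxU, e, he⟩

theorem flat (hf : IsLocalizingMorphism f) : Flat f := by
  refine (HasRingHomProperty.iff_exists_appLE (P := @Flat)
    (RingHom.Flat.stableUnderComposition.stableUnderCompositionWithLocalizationAway
      RingHom.Flat.holdsForLocalizationAway).left).2 fun x => ?_
  obtain ⟨V, U, hxU, e, he⟩ := hf.exists_appLE x
  exact ⟨V, U, hxU, e, he.flat⟩

theorem isIso_stalkMap (hf : IsLocalizingMorphism f) (x : X) : IsIso (f.stalkMap x) := by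
  obtain ⟨V, U, hxU, e, he⟩ := hf.exists_appLE x
  have hprime := IsAffineOpen.comap_primeIdealOf_appLE _ V.2 _ U.2 e hxU
  have hloc := (ConcreteCategory.isIso_iff_bijective (CommRingCat.ofHom _)).2
    (he.bijective_localRingHom _ _ (congrArg PrimeSpectrum.asIdeal hprime).symm)
  exact ((MorphismProperty.isomorphisms CommRingCat).arrow_mk_iso_iff
    (IsAffineOpen.arrowStalkMapIso f V V.2 U U.2 e hxU)).2 hloc

end IsLocalizingMorphism

theorem isLocalizingImmersion_image_stableUnderGenerization_and_ringedSpaceIso_general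
    {X Y : Scheme.{u}} [IsNoetherian X] (f : X ⟶ Y)
    (hf : IsLocalizingImmersion f) :
    (∀ y ∈ Set.range f.base, ∀ y' : Y, y' ⤳ y → y' ∈ Set.range f.base) ∧
    Topology.IsEmbedding f.base ∧
    ∀ x : X, IsIso (f.stalkMap x) := by
  obtain ⟨hloc, hinj⟩ := hf
  have := hloc.flat
  have hgen : GeneralizingMap f.base := Flat.generalizingMap f
  exact ⟨fun _ hy _ hy' => hgen.stableUnderGeneralization_range hy' hy,
    hgen.isEmbedding_of_injective f.base.hom.continuous hinj, hloc.isIso_stalkMap⟩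

/-- The image of a localizing immersion is stable under generization, and `f` induces an
isomorphism of ringed spaces onto its image (equivalently: `f` is a topological embedding
onto its image and all the stalk maps are isomorphisms). -/
theorem isLocalizingImmersion_image_stableUnderGenerization_and_ringedSpaceIso
    {X Y : Scheme.{u}} [IsNoetherian X] [IsNoetherian Y] (f : X ⟶ Y)
    (hf : IsLocalizingImmersion f) :
    (∀ y ∈ Set.range f.base, ∀ y' : Y, y' ⤳ y → y' ∈ Set.range f.base) ∧
    Topology.IsEmbedding f.base ∧
    ∀ x : X, IsIso (f.stalkMap x) :=
  isLocalizingImmersion_image_stableUnderGenerization_and_ringedSpaceIso_general f hf
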